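/- Let Γ act on L ≅ ℤ^ℓ via ρ, and extend the R(Γ)-valued quasi-polynomial F(q) = χ_{L/qL} to all integers. Then F satisfies the self-duality F(q) = (−1)^ℓ δ_ρ · F(−q) in R(Γ), where δ_ρ(γ) = det R_γ is the reciprocity character and the product is multiplication in the representation ring. -/

import Mathlib

/-!
The Smith normal form `S (R - 1) T = diag d` identifies the fixed points of `R` on `(ℤ/q)^ℓ`
with the kernel of `diag d`, so their number is `∏ gcd(dᵢ, q)`, the `ℓ - r` vanishing `dᵢ`
contributing `q^(ℓ-r)`. The self-duality then reduces to `det R = (-1)^r` for `R` of finite order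
with `rk (R - 1) = r`. Such an `R` is semisimple, so `1` is a root of multiplicity `ℓ - r` of its
characteristic polynomial `χ`. Its only real eigenvalues are `±1`, so the cofactor
`χ / (X - 1)^(ℓ-r)` is monic without roots in `[0, ∞)`, hence positive at `0`; comparing with
`χ(0) = (-1)^ℓ det R` and `det R = ±1` gives the sign.
-/

/-- Number of fixed points of the matrix `M` acting on row vectors of `(ℤ/qℤ)^ℓ`. -/
noncomputable def fixCard {ℓ : ℕ} (M : Matrix (Fin ℓ) (Fin ℓ) ℤ) (q : ℕ) : ℕ :=
  Nat.card {x : Fin ℓ → ZMod q // Matrix.vecMul x (M.map (Int.cast : ℤ → ZMod q)) = x}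

open Polynomial Module Matrix LinearMap

theorem ZMod.card_mul_intCast_eq_zero (q : ℕ) [NeZero q] (d : ℤ) :
    Nat.card {a : ZMod q // a * d = 0} = Int.gcd d q := by
  have hker : {a : ZMod q // a * d = 0} ≃ (nsmulAddMonoidHom (α := ZMod q) d.natAbs).ker :=
    Equiv.subtypeEquivRight fun a => by
      rw [AddMonoidHom.mem_ker, nsmulAddMonoidHom_apply, natAbs_nsmul_eq_zero, zsmul_eq_mul,
        mul_comm]
  rw [Nat.card_congr hker, IsAddCyclic.card_nsmulAddMonoidHom_ker, Nat.card_zmod, Int.gcd,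
    Int.natAbs_natCast, Nat.gcd_comm]

namespace Matrix

variable {R n : Type*} [CommRing R] [Fintype n] [DecidableEq n]

theorem isUnit_det_map {S : Type*} [CommRing S] (f : R →+* S) {A : Matrix n n R}
    (hA : IsUnit A.det) : IsUnit (A.map f).det := by
  rw [← RingHom.mapMatrix_apply, ← RingHom.map_det]
  exact hA.map f

theorem map_mul_mul_of_eq_diagonal {S : Type*} [CommRing S] (f : R →+* S)
    {A U V : Matrix n n R} {d : n → R} (h : U * A * V = diagonal d) :
    U.map f * A.map f * V.map f = diagonal fun i => f (d i) := by
  simp only [← RingHom.mapMatrix_apply, ← map_mul, h]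
  exact diagonal_map (map_zero f)

theorem card_vecMul_mul_mul_eq_zero (A U V : Matrix n n R) (hU : IsUnit U.det)
    (hV : IsUnit V.det) :
    Nat.card {x : n → R // x ᵥ* (U * A * V) = 0} = Nat.card {x : n → R // x ᵥ* A = 0} := by
  refine Nat.card_congr
    { toFun := fun x => ⟨x.1 ᵥ* U, ?_⟩, invFun := fun y => ⟨y.1 ᵥ* U⁻¹, ?_⟩,
      left_inv := fun x => ?_, right_inv := fun y => ?_ }
  · simpa [vecMul_vecMul, Matrix.mul_assoc, mul_nonsing_inv V hV] using
      congrArg (· ᵥ* V⁻¹) x.2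
  · rw [vecMul_vecMul, mul_assoc, nonsing_inv_mul_cancel_left _ _ hU, ← vecMul_vecMul, y.2,
      zero_vecMul]
  · exact Subtype.ext <| by simp [vecMul_vecMul, mul_nonsing_inv U hU]
  · exact Subtype.ext <| by simp [vecMul_vecMul, nonsing_inv_mul U hU]

theorem card_vecMul_diagonal_eq_zero (w : n → R) :
    Nat.card {x : n → R // x ᵥ* diagonal w = 0} = ∏ i, Nat.card {a : R // a * w i = 0} := by
  rw [← Nat.card_pi]
  refine Nat.card_congr ((Equiv.subtypeEquivRight fun x => ?_).trans
    (Equiv.subtypePiEquivPi (p := fun i (a : R) => a * w i = 0)))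
  simp [funext_iff, vecMul_diagonal]

theorem rank_map_intCast_of_mul_mul_eq_diagonal {K : Type*} [Field K] [CharZero K]
    {A S T : Matrix n n ℤ} (hS : IsUnit S.det) (hT : IsUnit T.det) {d : n → ℤ}
    (h : S * A * T = diagonal d) :
    (A.map (Int.cast : ℤ → K)).rank = Fintype.card {i // d i ≠ 0} := by
  classical
  set c := Int.castRingHom K
  have hrank := congrArg Matrix.rank (map_mul_mul_of_eq_diagonal c h)
  rw [rank_mul_eq_left_of_isUnit_det _ _ (isUnit_det_map c hT),
    rank_mul_eq_right_of_isUnit_det _ _ (isUnit_det_map c hS), rank_diagonal] at hrank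
  simpa [c] using hrank

end Matrix

theorem fixCard_eq_prod_gcd {ℓ : ℕ} (q : ℕ) [NeZero q] (R S T : Matrix (Fin ℓ) (Fin ℓ) ℤ)
    (hS : IsUnit S.det) (hT : IsUnit T.det) (d : Fin ℓ → ℤ)
    (hSNF : S * (R - 1) * T = diagonal d) :
    fixCard R q = ∏ i, Int.gcd (d i) q := by
  set f := Int.castRingHom (ZMod q)
  have hfix (x : Fin ℓ → ZMod q) : x ᵥ* R.map Int.cast = x ↔ x ᵥ* (R - 1).map f = 0 := by
    rw [← RingHom.mapMatrix_apply, map_sub, map_one, vecMul_sub, vecMul_one, sub_eq_zero]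
    rfl
  rw [fixCard, Nat.card_congr (Equiv.subtypeEquivRight hfix),
    ← card_vecMul_mul_mul_eq_zero _ _ _ (isUnit_det_map f hS) (isUnit_det_map f hT),
    map_mul_mul_of_eq_diagonal f hSNF,
    card_vecMul_diagonal_eq_zero]
  exact Finset.prod_congr rfl fun i _ => ZMod.card_mul_intCast_eq_zero q (d i)

theorem Polynomial.Monic.eval_pos_of_forall_ge_not_isRoot {p : ℝ[X]} (hp : p.Monic) {a : ℝ}
    (hroot : ∀ t, a ≤ t → ¬ p.IsRoot t) : 0 < p.eval a := by
  obtain ⟨b, hab, hb⟩ : ∃ b, a ≤ b ∧ 0 < p.eval b := by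
    rcases Nat.eq_zero_or_pos p.natDegree with hdeg | hdeg
    · exact ⟨a, le_rfl, by simp [hp.natDegree_eq_zero.mp hdeg]⟩
    · have hlim := tendsto_atTop_of_leadingCoeff_nonneg p (natDegree_pos_iff_degree_pos.mp hdeg)
        (by simp [hp.leadingCoeff])
      exact ((hlim.eventually_gt_atTop 0).and (Filter.eventually_ge_atTop a)).exists.imp
        fun _ h => ⟨h.2, h.1⟩
  by_contra! ha
  obtain ⟨c, hc, hc0⟩ := intermediate_value_Icc hab p.continuous.continuousOn ⟨ha, hb.le⟩
  exact hroot c hc.1 hc0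

namespace Module.End

variable {K V : Type*} [Field K] [AddCommGroup V] [Module K V] {f : End K V} {N : ℕ}

theorem isSemisimple_of_pow_eq_one [CharZero K] (hN : N ≠ 0) (hf : f ^ N = 1) :
    f.IsSemisimple :=
  isSemisimple_of_squarefree_aeval_eq_zero
    (separable_X_pow_sub_C (1 : K) (Nat.cast_ne_zero.mpr hN) one_ne_zero).squarefree
    (by simp [hf])

theorem HasEigenvalue.pow_eq_one_of_pow_eq_one (hf : f ^ N = 1) {μ : K}
    (hμ : f.HasEigenvalue μ) : μ ^ N = 1 := by
  obtain ⟨v, hv⟩ := hμ.exists_hasEigenvector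
  have h := hv.pow_apply N
  rw [hf, one_apply] at h
  exact smul_left_injective K hv.2 (by simpa using h.symm)

theorem rootMultiplicity_one_charpoly_of_pow_eq_one [CharZero K] [FiniteDimensional K V]
    (hN : N ≠ 0) (hf : f ^ N = 1) :
    f.charpoly.rootMultiplicity 1 = finrank K (ker (f - 1)) := by
  rw [← LinearMap.finrank_maxGenEigenspace_eq,
    (isSemisimple_of_pow_eq_one hN hf).isFinitelySemisimple.maxGenEigenspace_eq_eigenspace,
    eigenspace_def, one_smul]

end Module.End

theorem LinearMap.det_eq_neg_one_pow_finrank_range_sub_one {V : Type*} [AddCommGroup V]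
    [Module ℝ V] [FiniteDimensional ℝ V] {f : End ℝ V} {N : ℕ} (hN : N ≠ 0) (hf : f ^ N = 1) :
    f.det = (-1) ^ finrank ℝ (range (f - 1)) := by
  obtain ⟨g, hpg, hg⟩ := f.charpoly.exists_eq_pow_rootMultiplicity_mul_and_not_dvd
    (LinearMap.charpoly_monic f).ne_zero 1
  rw [Module.End.rootMultiplicity_one_charpoly_of_pow_eq_one hN hf] at hpg
  have hg_monic : g.Monic := by
    have hp := LinearMap.charpoly_monic f
    rw [hpg] at hp
    exact ((monic_X_sub_C 1).pow _).of_mul_monic_left hp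
  have hg_root (t : ℝ) (ht : 0 ≤ t) : ¬ g.IsRoot t := by
    intro hgt
    have hpt : f.charpoly.IsRoot t := by simp [hpg, hgt.eq_zero]
    obtain rfl : t = 1 := (pow_eq_one_iff_of_nonneg ht hN).mp
      (((Module.End.hasEigenvalue_iff_isRoot_charpoly f t).mpr hpt).pow_eq_one_of_pow_eq_one hf)
    exact hg (dvd_iff_isRoot.mpr hgt)
  have hdet : f.det = (-1) ^ finrank ℝ (range (f - 1)) * g.eval 0 := by
    rw [LinearMap.det_eq_sign_charpoly_coeff, coeff_zero_eq_eval_zero, hpg, eval_mul, eval_pow,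
      eval_sub, eval_X, eval_C, ← (f - 1).finrank_range_add_finrank_ker, zero_sub, pow_add]
    have hsq : (-1 : ℝ) ^ finrank ℝ (ker (f - 1)) * (-1) ^ finrank ℝ (ker (f - 1)) = 1 := by
      rw [← mul_pow]; norm_num
    linear_combination ((-1) ^ finrank ℝ (range (f - 1)) * g.eval 0) * hsq
  have hdet_sq : f.det = 1 ∨ f.det = -1 := by
    have : f.det ^ N = 1 := by rw [← map_pow, hf, map_one]
    exact ((pow_eq_one_iff_of_ne_zero hN).mp this).imp_right And.left
  have hg0 := hg_monic.eval_pos_of_forall_ge_not_isRoot hg_root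
  rcases neg_one_pow_eq_or ℝ (finrank ℝ (range (f - 1))) with h | h <;>
    rw [h] at hdet ⊢ <;> rcases hdet_sq with h' | h' <;> rw [h'] at hdet ⊢ <;> nlinarith

namespace Matrix

variable {n : Type*} [Fintype n] [DecidableEq n] {N : ℕ}

theorem det_eq_neg_one_pow_rank_sub_one {R : Matrix n n ℝ} (hN : N ≠ 0) (hR : R ^ N = 1) :
    R.det = (-1) ^ (R - 1).rank := by
  have hpow : toLinAlgEquiv' R ^ N = 1 := by rw [← map_pow, hR, map_one]
  have h := det_eq_neg_one_pow_finrank_range_sub_one hN hpow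
  rw [← map_one toLinAlgEquiv', ← map_sub] at h
  rw [rank, ← det_toLin']
  exact h

theorem det_eq_neg_one_pow_rank_map_sub_one {R : Matrix n n ℤ} (hN : N ≠ 0) (hR : R ^ N = 1) :
    R.det = (-1) ^ ((R - 1).map (Int.cast : ℤ → ℝ)).rank := by
  set c := Int.castRingHom ℝ
  have hpow : c.mapMatrix R ^ N = 1 := by rw [← map_pow, hR, map_one]
  have h := det_eq_neg_one_pow_rank_sub_one hN hpow
  rw [← RingHom.map_det, ← map_one c.mapMatrix, ← map_sub] at h
  apply Int.cast_injective (α := ℝ)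
  rw [Int.cast_pow, Int.cast_neg, Int.cast_one]
  simpa [c] using h

end Matrix

theorem Fin.prod_eq_prod_ite_mul_pow {M : Type*} [CommMonoid M] {ℓ r : ℕ} (hr : r ≤ ℓ)
    (f : Fin ℓ → M) {c : M} (hf : ∀ i : Fin ℓ, r ≤ (i : ℕ) → f i = c) :
    ∏ i, f i = (∏ i : Fin ℓ, if (i : ℕ) < r then f i else 1) * c ^ (ℓ - r) := by
  open Finset in
  rw [← prod_filter_mul_prod_filter_not univ (fun i : Fin ℓ => (i : ℕ) < r), prod_filter,
    prod_congr rfl fun i hi => hf i (not_lt.mp (mem_filter.mp hi).2), Finset.prod_const,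
    filter_not, card_sdiff, inter_univ, card_univ, Fintype.card_fin, Fin.card_filter_val_lt,
    min_eq_right hr]

theorem stmt15_general (ℓ : ℕ) (Γ : Type*) [Group Γ] [Fintype Γ]
    (ρ : Γ →* Matrix.GeneralLinearGroup (Fin ℓ) ℤ)
    (r : Γ → ℕ) (hr : ∀ γ, r γ ≤ ℓ)
    (S T : Γ → Matrix (Fin ℓ) (Fin ℓ) ℤ)
    (hS : ∀ γ, IsUnit (S γ).det) (hT : ∀ γ, IsUnit (T γ).det)
    (d : Γ → Fin ℓ → ℤ)
    (hSNF : ∀ γ, S γ * ((ρ γ : Matrix (Fin ℓ) (Fin ℓ) ℤ) - 1) * T γ = Matrix.diagonal (d γ))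
    (hpos : ∀ γ, ∀ i : Fin ℓ, (i : ℕ) < r γ → 0 < d γ i)
    (hzero : ∀ γ, ∀ i : Fin ℓ, r γ ≤ (i : ℕ) → d γ i = 0)
    (q : ℕ) (hq : 0 < q) :
    (fun γ : Γ => (fixCard (ρ γ : Matrix (Fin ℓ) (Fin ℓ) ℤ) q : ℂ))
      = fun γ : Γ => (-1 : ℂ) ^ ℓ * ((ρ γ : Matrix (Fin ℓ) (Fin ℓ) ℤ).det : ℂ) *
          ((∏ i : Fin ℓ, if (i : ℕ) < r γ then (Int.gcd (d γ i) (q : ℤ) : ℂ) else 1)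
            * (-(q : ℂ)) ^ (ℓ - r γ)) := by
  have : NeZero q := ⟨hq.ne'⟩
  funext γ
  have hfinite : (ρ γ : Matrix (Fin ℓ) (Fin ℓ) ℤ) ^ Fintype.card Γ = 1 := by
    rw [← Units.val_pow_eq_pow_val, ← map_pow, pow_card_eq_one, map_one, Units.val_one]
  have hnonzero : Fintype.card {i // d γ i ≠ 0} = r γ := by
    rw [Fintype.card_congr (Equiv.subtypeEquivRight fun i => ⟨fun h => not_le.mp
      (mt (hzero γ i) h), fun h => (hpos γ i h).ne'⟩), Fintype.card_subtype,
      Fin.card_filter_val_lt, min_eq_right (hr γ)]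
  have hdet := det_eq_neg_one_pow_rank_map_sub_one Fintype.card_ne_zero hfinite
  rw [rank_map_intCast_of_mul_mul_eq_diagonal (hS γ) (hT γ) (hSNF γ), hnonzero] at hdet
  rw [fixCard_eq_prod_gcd q _ _ _ (hS γ) (hT γ) _ (hSNF γ), hdet]
  push_cast
  rw [Fin.prod_eq_prod_ite_mul_pow (hr γ) _ (c := (q : ℂ)) fun i hi => by simp [hzero γ i hi],
    neg_pow]
  have hsign : (-1 : ℂ) ^ ℓ * (-1) ^ r γ * (-1) ^ (ℓ - r γ) = 1 := by
    rw [← pow_add, ← pow_add, show ℓ + r γ + (ℓ - r γ) = 2 * ℓ by have := hr γ; omega, pow_mul]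
    norm_num
  calc _ = ((-1 : ℂ) ^ ℓ * (-1) ^ r γ * (-1) ^ (ℓ - r γ)) * _ := by rw [hsign, one_mul]
    _ = _ := by ring

/-- Self-duality: Identifying the representation ring `R(Γ)`
with class functions via characters, the quasi-polynomial extension of
`F(q) = χ_{L/qL}` to all integers satisfies `F(q) = (−1)^ℓ δ_ρ · F(−q)`,
i.e. for every `q > 0` and `γ ∈ Γ`,
`χ_{L/qL}(γ) = (−1)^ℓ · det(R_γ) · (∏_j gcd(e_{γ,j}, q)) · (−q)^{ℓ−r(γ)}`,
the right-hand side being the value at `γ` of `(−1)^ℓ δ_ρ · F(−q)` where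
`F(−q)` is the polynomial extension of the character formula
(`gcd(e, −q) = gcd(e, q)`). The ranks `r γ` and elementary divisors `d γ j`
of `R_γ − I` are encoded by Smith normal forms. -/
theorem stmt15 (ℓ : ℕ) (Γ : Type*) [Group Γ] [Fintype Γ]
    (ρ : Γ →* Matrix.GeneralLinearGroup (Fin ℓ) ℤ) (hρ : Function.Injective ρ)
    (r : Γ → ℕ) (hr : ∀ γ, r γ ≤ ℓ)
    (S T : Γ → Matrix (Fin ℓ) (Fin ℓ) ℤ)
    (hS : ∀ γ, IsUnit (S γ).det) (hT : ∀ γ, IsUnit (T γ).det)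
    (d : Γ → Fin ℓ → ℤ)
    (hSNF : ∀ γ, S γ * ((ρ γ : Matrix (Fin ℓ) (Fin ℓ) ℤ) - 1) * T γ = Matrix.diagonal (d γ))
    (hpos : ∀ γ, ∀ i : Fin ℓ, (i : ℕ) < r γ → 0 < d γ i)
    (hzero : ∀ γ, ∀ i : Fin ℓ, r γ ≤ (i : ℕ) → d γ i = 0)
    (hdvd : ∀ γ, ∀ i j : Fin ℓ, i ≤ j → (j : ℕ) < r γ → d γ i ∣ d γ j)
    (q : ℕ) (hq : 0 < q) :
    (fun γ : Γ => (fixCard (ρ γ : Matrix (Fin ℓ) (Fin ℓ) ℤ) q : ℂ))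
      = fun γ : Γ => (-1 : ℂ) ^ ℓ * ((ρ γ : Matrix (Fin ℓ) (Fin ℓ) ℤ).det : ℂ) *
          ((∏ i : Fin ℓ, if (i : ℕ) < r γ then (Int.gcd (d γ i) (q : ℤ) : ℂ) else 1)
            * (-(q : ℂ)) ^ (ℓ - r γ)) :=
  stmt15_general ℓ Γ ρ r hr S T hS hT d hSNF hpos hzero q hq
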